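/- In the ring of formal power series over \mathbb{Z}[t,s], the generating function of the Hankel determinants d_2(n,t,s) = \det( M_{2+i+j,0}(t,s) )_{i,j=0}^{n-1} (with d_2(0,t,s) = 1) satisfies (1-x)^2 (1 + (2-t^2)x + x^2) \cdot \sum_{n \geq 0} d_2(n,t,s) x^n = 1 + (1 + s^2 - t^2)x + (s-t)^2 x^2. -/

import Mathlib

open MvPolynomial

/-- Abbreviation: the variable `t` (weight of horizontal steps at positive height). -/
noncomputable abbrev tVar : MvPolynomial (Fin 2) ℤ := MvPolynomial.X 0

/-- Abbreviation: the variable `s` (weight of horizontal steps at height `0`). -/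
noncomputable abbrev sVar : MvPolynomial (Fin 2) ℤ := MvPolynomial.X 1

/-- The weight polynomials `M_{n,k}(t,s)` of Motzkin paths from `(0,0)` to `(n,k)`,
where horizontal steps at height `0` have weight `s` and at positive height weight `t`:
`M_{n,0} = s·M_{n-1,0} + M_{n-1,1}`, and for `k ≥ 1`
`M_{n,k} = M_{n-1,k-1} + t·M_{n-1,k} + M_{n-1,k+1}`, with `M_{n,k} = 0` for `k < 0`
and `M_{0,k} = [k = 0]`. -/
noncomputable def motzkinPoly2 : ℕ → ℤ → MvPolynomial (Fin 2) ℤ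
  | 0, k => if k = 0 then 1 else 0
  | n + 1, k =>
      if k < 0 then 0 else
      if k = 0 then sVar * motzkinPoly2 n 0 + motzkinPoly2 n 1
      else motzkinPoly2 n (k - 1) + tVar * motzkinPoly2 n k + motzkinPoly2 n (k + 1)
  termination_by n _ => n

/-!
Let `A = (M_{i,k})`, which is lower unitriangular, and let `J` be the Jacobi matrix with diagonal
`s, t, t, …` and ones next to the diagonal. The recurrence reads `A J = (M_{i+1,k})`; as `J` is
symmetric, this gives `∑ₖ M_{i,k} M_{j,k} = M_{i+j,0}`. Hence the shifted Hankel matrix of size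
`n` is the leading `n × n` block of `A J² Aᵀ` in size `n + 1`, and `d₂(n)` is the determinant of
the leading block of `J_{n+1}²`. That block is `J_n²` plus a matrix unit in the corner, so
expanding along the last row gives `d₂(n) = d₂(n-1) + h_n²`, where `h_n = det J_n` satisfies
`h_{n+2} = t h_{n+1} - h_n`. The squares of such a sequence satisfy the recurrence with
characteristic polynomial `(x - 1)(x² - (t² - 2)x + 1)`, and taking partial sums adds one more
factor `1 - x`.
-/

open Matrix Finset

section

variable {R : Type*} [CommRing R]

theorem det_updateRow_single {n : ℕ} (M : Matrix (Fin (n + 1)) (Fin (n + 1)) R)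
    (i j : Fin (n + 1)) (c : R) :
    (M.updateRow i (Pi.single j c)).det =
      (-1) ^ (i + j : ℕ) * c * (M.submatrix i.succAbove j.succAbove).det := by
  have : Pi.single j c = c • Pi.single j (1 : R) := by ext k; simp [Pi.single_apply]
  rw [this, det_updateRow_smul, ← adjugate_apply, adjugate_fin_succ_eq_det_submatrix]
  ring

theorem det_updateCol_single {n : ℕ} (M : Matrix (Fin (n + 1)) (Fin (n + 1)) R)
    (i j : Fin (n + 1)) (c : R) :
    (M.updateCol j (Pi.single i c)).det =
      (-1) ^ (i + j : ℕ) * c * (M.submatrix i.succAbove j.succAbove).det := by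
  rw [← det_transpose, ← updateRow_transpose, det_updateRow_single, add_comm, ← det_transpose,
    transpose_submatrix, transpose_transpose]

theorem det_add_single_last {n : ℕ} (M : Matrix (Fin (n + 1)) (Fin (n + 1)) R) (c : R) :
    (M + single (Fin.last n) (Fin.last n) c).det =
      M.det + c * (M.submatrix Fin.castSucc Fin.castSucc).det := by
  have : M + single (Fin.last n) (Fin.last n) c =
      M.updateRow (Fin.last n) (M (Fin.last n) + Pi.single (Fin.last n) c) := by
    ext i j
    rcases eq_or_ne i (Fin.last n) with rfl | hi
    · simp [single_apply, Pi.single_apply, eq_comm]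
    · simp [hi, hi.symm]
  rw [this, det_updateRow_add, updateRow_eq_self, det_updateRow_single, Fin.succAbove_last,
    Even.neg_one_pow ⟨_, rfl⟩, one_mul]

theorem submatrix_castSucc_mul_mul_transpose {n : ℕ} {L X : Matrix (Fin (n + 1)) (Fin (n + 1)) R}
    (hL : ∀ i : Fin n, L i.castSucc (Fin.last n) = 0) :
    (L * X * Lᵀ).submatrix Fin.castSucc Fin.castSucc =
      L.submatrix Fin.castSucc Fin.castSucc * X.submatrix Fin.castSucc Fin.castSucc *
        (L.submatrix Fin.castSucc Fin.castSucc)ᵀ := by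
  ext i j
  simp [mul_apply, Fin.sum_univ_castSucc, hL]

variable (b : ℕ → R)

def jacobi (i j : ℕ) : R :=
  (if i = j then b i else 0) + (if i + 1 = j then 1 else 0) + (if j + 1 = i then 1 else 0)

def jacobiMatrix (n : ℕ) : Matrix (Fin n) (Fin n) R := of fun i j => jacobi b i j

def continuant : ℕ → R
  | 0 => 1
  | 1 => b 0
  | n + 2 => b (n + 1) * continuant (n + 1) - continuant n

theorem jacobi_comm (i j : ℕ) : jacobi b i j = jacobi b j i := by
  unfold jacobi
  by_cases h : i = j
  · subst h; rfl
  · simp [h, Ne.symm h, add_comm]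

theorem jacobiMatrix_transpose (n : ℕ) : (jacobiMatrix b n)ᵀ = jacobiMatrix b n := by
  ext i j
  exact jacobi_comm b j i

@[simp]
theorem jacobiMatrix_submatrix_castSucc (n : ℕ) :
    (jacobiMatrix b (n + 1)).submatrix Fin.castSucc Fin.castSucc = jacobiMatrix b n := by
  ext i j
  simp [jacobiMatrix]

-- Deleting the last row and the next-to-last column of `J_{n+2}` leaves a matrix whose last
-- column is a unit vector.
theorem det_jacobiMatrix_submatrix_castSucc_succAbove (n : ℕ) :
    ((jacobiMatrix b (n + 2)).submatrix Fin.castSucc (Fin.last n).castSucc.succAbove).det =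
      (jacobiMatrix b n).det := by
  set C := (jacobiMatrix b (n + 2)).submatrix Fin.castSucc (Fin.last n).castSucc.succAbove
  have hC : C = C.updateCol (Fin.last n) (Pi.single (Fin.last n) 1) := by
    ext i j
    rcases eq_or_ne j (Fin.last n) with rfl | hj
    · simp only [updateCol_self, Pi.single_apply, Fin.ext_iff]
      simp only [C, jacobiMatrix, jacobi, submatrix_apply, of_apply,
        Fin.succAbove_castSucc_self, Fin.val_succ, Fin.val_last, Fin.val_castSucc]
      have := i.isLt
      split_ifs <;> first | omega | simp
    · rw [updateCol_ne hj]
  have hsub : C.submatrix Fin.castSucc Fin.castSucc = jacobiMatrix b n := by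
    ext i j
    simp [C, jacobiMatrix, Fin.succAbove_castSucc_of_lt _ _ (Fin.castSucc_lt_last j)]
  rw [hC, det_updateCol_single, Fin.succAbove_last, hsub, Even.neg_one_pow ⟨_, rfl⟩, one_mul,
    one_mul]

theorem det_jacobiMatrix (n : ℕ) : (jacobiMatrix b n).det = continuant b n := by
  induction n using Nat.twoStepInduction with
  | zero => simp [continuant]
  | one => simp [jacobiMatrix, jacobi, continuant]
  | more n ih₀ ih₁ =>
    set J := jacobiMatrix b (n + 2)
    have hJ : J = J.updateRow (Fin.last (n + 1))
        (Pi.single (Fin.last (n + 1)) (b (n + 1)) + Pi.single (Fin.last n).castSucc 1) := by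
      ext i j
      rcases eq_or_ne i (Fin.last (n + 1)) with rfl | hi
      · simp only [updateRow_self, Pi.add_apply, Pi.single_apply, Fin.ext_iff]
        simp only [J, jacobiMatrix, jacobi, of_apply, Fin.val_last, Fin.val_castSucc]
        have := j.isLt
        split_ifs <;> first | omega | simp
      · rw [updateRow_ne hi]
    rw [hJ, det_updateRow_add, det_updateRow_single, det_updateRow_single, Fin.succAbove_last,
      jacobiMatrix_submatrix_castSucc, det_jacobiMatrix_submatrix_castSucc_succAbove, ih₀, ih₁,
      Fin.val_castSucc, Fin.val_last, Fin.val_last, Even.neg_one_pow ⟨_, rfl⟩,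
      Odd.neg_one_pow ⟨n, by ring⟩, continuant]
    ring

theorem jacobiMatrix_mul_self_submatrix_castSucc (n : ℕ) :
    (jacobiMatrix b (n + 2) * jacobiMatrix b (n + 2)).submatrix Fin.castSucc Fin.castSucc =
      jacobiMatrix b (n + 1) * jacobiMatrix b (n + 1) + single (Fin.last n) (Fin.last n) 1 := by
  ext i j
  rw [submatrix_apply, mul_apply, Fin.sum_univ_castSucc, Matrix.add_apply, mul_apply]
  congr 1
  simp only [jacobiMatrix, jacobi, of_apply, Fin.val_castSucc, Fin.val_last, single_apply,
    Fin.ext_iff]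
  have := i.isLt
  have := j.isLt
  split_ifs <;> first | omega | simp

theorem det_jacobiMatrix_mul_self_submatrix_castSucc (n : ℕ) :
    ((jacobiMatrix b (n + 1) * jacobiMatrix b (n + 1)).submatrix Fin.castSucc Fin.castSucc).det =
      ∑ k ∈ range (n + 1), continuant b k ^ 2 := by
  induction n with
  | zero => simp [continuant]
  | succ n ih =>
    rw [jacobiMatrix_mul_self_submatrix_castSucc, det_add_single_last, one_mul, ih, det_mul,
      det_jacobiMatrix, sum_range_succ _ (n + 1)]
    ring

def weightedMotzkin : ℕ → ℕ → R
  | 0, k => if k = 0 then 1 else 0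
  | n + 1, 0 => b 0 * weightedMotzkin n 0 + weightedMotzkin n 1
  | n + 1, k + 1 =>
      weightedMotzkin n k + b (k + 1) * weightedMotzkin n (k + 1) + weightedMotzkin n (k + 2)

def motzkinMatrix (n : ℕ) : Matrix (Fin n) (Fin n) R := of fun i k => weightedMotzkin b i k

theorem weightedMotzkin_eq_zero_of_lt {n k : ℕ} (h : n < k) : weightedMotzkin b n k = 0 := by
  induction n generalizing k with
  | zero => simp [weightedMotzkin, h.ne']
  | succ n ih =>
    obtain ⟨k, rfl⟩ : ∃ m, k = m + 1 := ⟨k - 1, by omega⟩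
    simp [weightedMotzkin, ih (show n < k by omega), ih (show n < k + 1 by omega),
      ih (show n < k + 2 by omega)]

@[simp]
theorem weightedMotzkin_self (n : ℕ) : weightedMotzkin b n n = 1 := by
  induction n with
  | zero => simp [weightedMotzkin]
  | succ n ih => simp [weightedMotzkin, ih, weightedMotzkin_eq_zero_of_lt b (Nat.lt_succ_self n),
      weightedMotzkin_eq_zero_of_lt b (show n < n + 2 by omega)]

theorem det_motzkinMatrix (n : ℕ) : (motzkinMatrix b n).det = 1 := by
  rw [det_of_isLowerTriangular (motzkinMatrix b n) fun i j h => weightedMotzkin_eq_zero_of_lt b h]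
  simp [motzkinMatrix]

@[simp]
theorem motzkinMatrix_submatrix_castSucc (n : ℕ) :
    (motzkinMatrix b (n + 1)).submatrix Fin.castSucc Fin.castSucc = motzkinMatrix b n := by
  ext i j
  simp [motzkinMatrix]

theorem sum_weightedMotzkin_mul_jacobi {n i k : ℕ} (hi : i < n) (hk : k < n) :
    ∑ j ∈ range n, weightedMotzkin b i j * jacobi b j k = weightedMotzkin b (i + 1) k := by
  simp only [jacobi, mul_add, mul_ite, mul_one, mul_zero, sum_add_distrib, sum_ite_eq,
    sum_ite_eq', mem_range, if_pos hk]
  have hlast : (if k + 1 < n then weightedMotzkin b i (k + 1) else 0) =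
      weightedMotzkin b i (k + 1) := by
    split_ifs with h
    · rfl
    · rw [weightedMotzkin_eq_zero_of_lt b (by omega)]
  rw [hlast]
  cases k with
  | zero =>
    simp only [Nat.add_eq_zero_iff, one_ne_zero, and_false, if_false, sum_const_zero, add_zero,
      weightedMotzkin]
    ring
  | succ m =>
    simp only [Nat.add_right_cancel_iff, sum_ite_eq', mem_range, if_pos (show m < n by omega),
      weightedMotzkin]
    ring

theorem motzkinMatrix_mul_jacobiMatrix (n : ℕ) :
    motzkinMatrix b n * jacobiMatrix b n =
      of fun i k : Fin n => weightedMotzkin b ((i : ℕ) + 1) k := by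
  ext i k
  rw [mul_apply, of_apply, ← sum_weightedMotzkin_mul_jacobi b i.isLt k.isLt,
    ← Fin.sum_univ_eq_sum_range (fun j => weightedMotzkin b i j * jacobi b j k)]
  rfl

theorem sum_weightedMotzkin_succ_mul_comm {N i j : ℕ} (hi : i < N) (hj : j < N) :
    ∑ k ∈ range N, weightedMotzkin b (i + 1) k * weightedMotzkin b j k =
      ∑ k ∈ range N, weightedMotzkin b i k * weightedMotzkin b (j + 1) k := by
  have hP : ∀ i j : Fin N,
      (motzkinMatrix b N * jacobiMatrix b N * (motzkinMatrix b N)ᵀ) i j =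
        ∑ k ∈ range N, weightedMotzkin b (i + 1) k * weightedMotzkin b j k := by
    intro i j
    rw [mul_apply, motzkinMatrix_mul_jacobiMatrix, ← Fin.sum_univ_eq_sum_range
      (fun k => weightedMotzkin b (i + 1) k * weightedMotzkin b j k)]
    rfl
  have hsymm : (motzkinMatrix b N * jacobiMatrix b N * (motzkinMatrix b N)ᵀ)ᵀ =
      motzkinMatrix b N * jacobiMatrix b N * (motzkinMatrix b N)ᵀ := by
    rw [transpose_mul, transpose_mul, transpose_transpose, jacobiMatrix_transpose, ← mul_assoc]
  rw [← hP ⟨i, hi⟩ ⟨j, hj⟩, ← hsymm, transpose_apply, hP]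
  exact sum_congr rfl fun k _ => mul_comm _ _

theorem sum_range_weightedMotzkin_mul {N i : ℕ} (hi : i < N) (f : ℕ → R) :
    ∑ k ∈ range N, weightedMotzkin b i k * f k =
      ∑ k ∈ range (i + 1), weightedMotzkin b i k * f k := by
  refine (sum_subset (range_subset_range.2 hi) fun k _ hk => ?_).symm
  rw [weightedMotzkin_eq_zero_of_lt b (by simpa using hk), zero_mul]

theorem sum_weightedMotzkin_mul_weightedMotzkin {N i j : ℕ} (hi : i < N) :
    ∑ k ∈ range N, weightedMotzkin b i k * weightedMotzkin b j k =
      weightedMotzkin b (i + j) 0 := by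
  suffices h : ∀ i N, i + j < N →
      ∑ k ∈ range N, weightedMotzkin b i k * weightedMotzkin b j k =
        weightedMotzkin b (i + j) 0 by
    rw [sum_range_weightedMotzkin_mul b hi,
      ← sum_range_weightedMotzkin_mul b (N := i + j + 1) (by omega), h i _ (by omega)]
  induction j with
  | zero =>
    intro i N h
    simp [weightedMotzkin, show 0 < N by omega]
  | succ j ih =>
    intro i N h
    rw [← sum_weightedMotzkin_succ_mul_comm b (by omega) (by omega), ih (i + 1) N (by omega)]
    congr 1
    omega

theorem hankel_eq_submatrix (n : ℕ) :
    (of fun i j : Fin n => weightedMotzkin b (2 + i + j) 0) =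
      (motzkinMatrix b (n + 1) * (jacobiMatrix b (n + 1) * jacobiMatrix b (n + 1)) *
        (motzkinMatrix b (n + 1))ᵀ).submatrix Fin.castSucc Fin.castSucc := by
  have hfactor : motzkinMatrix b (n + 1) * (jacobiMatrix b (n + 1) * jacobiMatrix b (n + 1)) *
        (motzkinMatrix b (n + 1))ᵀ =
      (motzkinMatrix b (n + 1) * jacobiMatrix b (n + 1)) *
        (motzkinMatrix b (n + 1) * jacobiMatrix b (n + 1))ᵀ := by
    rw [transpose_mul, jacobiMatrix_transpose, Matrix.mul_assoc, Matrix.mul_assoc,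
      Matrix.mul_assoc]
  ext i j
  rw [hfactor, submatrix_apply, mul_apply, motzkinMatrix_mul_jacobiMatrix]
  simp only [transpose_apply, of_apply, Fin.val_castSucc]
  rw [Fin.sum_univ_eq_sum_range (fun k => weightedMotzkin b (i + 1) k *
    weightedMotzkin b (j + 1) k), sum_weightedMotzkin_mul_weightedMotzkin b (by omega)]
  congr 1
  omega

theorem det_hankel_weightedMotzkin (n : ℕ) :
    (of fun i j : Fin n => weightedMotzkin b (2 + i + j) 0).det =
      ∑ k ∈ range (n + 1), continuant b k ^ 2 := by
  rw [hankel_eq_submatrix, submatrix_castSucc_mul_mul_transpose, det_mul, det_mul,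
    det_transpose, motzkinMatrix_submatrix_castSucc, det_motzkinMatrix,
    det_jacobiMatrix_mul_self_submatrix_castSucc, one_mul, mul_one]
  intro i
  exact weightedMotzkin_eq_zero_of_lt b i.isLt

theorem one_sub_X_mul_mk_sum_range (f : ℕ → R) :
    (1 - PowerSeries.X) * PowerSeries.mk (fun n => ∑ k ∈ range (n + 1), f k) =
      PowerSeries.mk f := by
  have : PowerSeries.mk (fun n => ∑ k ∈ range (n + 1), f k) =
      PowerSeries.mk f * PowerSeries.mk 1 := by
    ext n
    simp [PowerSeries.coeff_mul, Nat.sum_antidiagonal_eq_sum_range_succ_mk]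
  rw [this, mul_comm, mul_assoc, PowerSeries.mk_one_mul_one_sub_eq_one, mul_one]

theorem mul_mk_sq_of_recurrence (c : R) (u : ℕ → R)
    (hu : ∀ n, u (n + 2) = c * u (n + 1) - u n) :
    (1 - PowerSeries.X) * (1 + PowerSeries.C (2 - c ^ 2) * PowerSeries.X + PowerSeries.X ^ 2) *
        PowerSeries.mk (fun n => u n ^ 2) =
      PowerSeries.C (u 0 ^ 2) + PowerSeries.C (u 1 ^ 2 + (1 - c ^ 2) * u 0 ^ 2) * PowerSeries.X +
        PowerSeries.C ((u 1 - c * u 0) ^ 2) * PowerSeries.X ^ 2 := by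
  set F := PowerSeries.mk (fun n => u n ^ 2)
  have hlhs : (1 - PowerSeries.X) * (1 + PowerSeries.C (2 - c ^ 2) * PowerSeries.X +
      PowerSeries.X ^ 2) * F = F + PowerSeries.X * (PowerSeries.C (1 - c ^ 2) * F -
        PowerSeries.X * (PowerSeries.C (1 - c ^ 2) * F + PowerSeries.X * F)) := by
    simp only [map_sub, map_one, map_pow, map_ofNat]
    ring
  have hrhs (x y z : R) : PowerSeries.C x + PowerSeries.C y * PowerSeries.X +
      PowerSeries.C z * PowerSeries.X ^ 2 =
        PowerSeries.C x + PowerSeries.X * (PowerSeries.C y + PowerSeries.X * PowerSeries.C z) := by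
    ring
  rw [hlhs, hrhs]
  ext (_ | _ | _ | n) <;>
    simp only [F, LinearMap.map_add, LinearMap.map_sub, PowerSeries.coeff_zero_X_mul,
      PowerSeries.coeff_succ_X_mul, PowerSeries.coeff_C_mul, PowerSeries.coeff_mk,
      PowerSeries.coeff_zero_C,      PowerSeries.coeff_succ_C]
  · ring
  · linear_combination (u 2 + c * u 1 - u 0) * hu 0
  · linear_combination (u (n + 3) + c * u (n + 2) - u (n + 1)) * hu (n + 1) +
      (u (n + 2) - c * u (n + 1) - u n) * hu n

end

noncomputable def stWeight (k : ℕ) : MvPolynomial (Fin 2) ℤ := if k = 0 then sVar else tVar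

theorem motzkinPoly2_eq_weightedMotzkin (n k : ℕ) :
    motzkinPoly2 n k = weightedMotzkin stWeight n k := by
  induction n generalizing k with
  | zero => simp [motzkinPoly2, weightedMotzkin]
  | succ n ih =>
    cases k with
    | zero => simp [motzkinPoly2, weightedMotzkin, stWeight, ← ih]
    | succ k =>
      rw [motzkinPoly2, if_neg (by omega), if_neg (by omega)]
      simp [weightedMotzkin, stWeight, ← ih, add_assoc, one_add_one_eq_two]

/-- `(1-x)^2 (1 + (2-t^2)x + x^2) · ∑_n d_2(n,t,s) x^n
  = 1 + (1+s^2-t^2)x + (s-t)^2 x^2` in `(ℤ[t,s])[[x]]`,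
where `d_2(n,t,s) = det(M_{2+i+j,0}(t,s))`. -/
theorem genfun_hankel_det_two_weights_shift_two :
    (1 - PowerSeries.X) ^ 2 *
      (1 + PowerSeries.C (2 - tVar ^ 2) * PowerSeries.X +
        PowerSeries.X ^ 2) *
      PowerSeries.mk (fun n =>
        Matrix.det (Matrix.of fun i j : Fin n =>
          motzkinPoly2 (2 + (i : ℕ) + (j : ℕ)) 0)) =
      1 + PowerSeries.C (1 + sVar ^ 2 - tVar ^ 2) * PowerSeries.X +
        PowerSeries.C ((sVar - tVar) ^ 2) * PowerSeries.X ^ 2 := by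
  have hdet : (fun n => (of fun i j : Fin n => motzkinPoly2 (2 + (i : ℕ) + (j : ℕ)) 0).det) =
      fun n => ∑ k ∈ range (n + 1), continuant stWeight k ^ 2 := by
    funext n
    rw [← det_hankel_weightedMotzkin]
    have h0 (m : ℕ) : motzkinPoly2 m 0 = weightedMotzkin stWeight m 0 :=
      motzkinPoly2_eq_weightedMotzkin m 0
    simp only [h0]
  have hrec (n : ℕ) : continuant stWeight (n + 2) =
      tVar * continuant stWeight (n + 1) - continuant stWeight n := rfl
  rw [hdet, sq, mul_right_comm (1 - PowerSeries.X) (1 - PowerSeries.X),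
    mul_assoc _ (1 - PowerSeries.X), one_sub_X_mul_mk_sum_range,
    mul_mk_sq_of_recurrence tVar _ hrec, show continuant stWeight 0 = 1 from rfl,
    show continuant stWeight 1 = sVar from rfl, one_pow, map_one]
  ring_nf
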